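/- Let n ∈ ℕ be a time with ℓ_n^- = ℓ_n^+ =: h. Then n = 𝒜(ℓ~_n) + h, and writing n = N(k) one has k = 𝒜(ℓ~_n)/2 + h. -/

import Mathlib

open MeasureTheory Filter

/-- Initial local time: edge `i` denotes the half-integer edge `i + 1/2`
joining `i` and `i+1`; `aInit i = a(i + 1/2)`, which is `0` if `|i+1/2| - 1/2`
is even and `-1` if it is odd. -/
def aInit (i : ℤ) : ℤ := if Even (if 0 ≤ i then i else -i - 1) then 0 else -1

/-- State of the self-repelling walk: current position, edge local times
(`loc i` is the local time of the edge joining `i` and `i+1`, i.e. of the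
half-integer edge `i + 1/2`), and the number of coins used so far. -/
structure SRWState where
  pos : ℤ
  loc : ℤ → ℤ
  coins : ℕ

/-- One step of the self-repelling walk driven by the coin sequence `ε`. -/
def srwStep (ε : ℕ → ℤ) (s : SRWState) : SRWState :=
  let lm := s.loc (s.pos - 1)   -- ℓ_n⁻ = ℓ_n(X_n - 1/2)
  let lp := s.loc s.pos         -- ℓ_n⁺ = ℓ_n(X_n + 1/2)
  let next : ℤ := if lp < lm then s.pos + 1
    else if lm < lp then s.pos - 1
    else s.pos + ε s.coins
  { pos := next
    loc := fun i => if i = min s.pos next then s.loc i + 1 else s.loc i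
    coins := if lm = lp then s.coins + 1 else s.coins }

/-- The self-repelling walk: state after `n` steps. -/
def srw (ε : ℕ → ℤ) : ℕ → SRWState
  | 0 => ⟨0, aInit, 0⟩
  | n + 1 => srwStep ε (srw ε n)

/-- Position `X_n` of the self-repelling walk. -/
def Xwalk (ε : ℕ → ℤ) (n : ℕ) : ℤ := (srw ε n).pos

/-- Edge local time `ℓ_n(i + 1/2)`. -/
def ellEdge (ε : ℕ → ℤ) (n : ℕ) (i : ℤ) : ℤ := (srw ε n).loc i

/-- `ℓ_n⁻ = ℓ_n(X_n - 1/2)`. -/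
def ellMinus (ε : ℕ → ℤ) (n : ℕ) : ℤ := ellEdge ε n (Xwalk ε n - 1)

/-- `ℓ_n⁺ = ℓ_n(X_n + 1/2)`. -/
def ellPlus (ε : ℕ → ℤ) (n : ℕ) : ℤ := ellEdge ε n (Xwalk ε n)

/-- `n` is an equality time: `ℓ_n⁻ = ℓ_n⁺`. -/
def IsEqTime (ε : ℕ → ℤ) (n : ℕ) : Prop := ellMinus ε n = ellPlus ε n

/-- `N(k)`: the `(k+1)`-st smallest equality time. -/
noncomputable def timeN (ε : ℕ → ℤ) (k : ℕ) : ℕ := Nat.nth (IsEqTime ε) k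

/-- `H_n = (ℓ_n⁻ + ℓ_n⁺)/2`. -/
def Hheight (ε : ℕ → ℤ) (n : ℕ) : ℤ := (ellMinus ε n + ellPlus ε n) / 2

/-- `ã(x)`: `0` for even `x`, `-1` for odd `x`. -/
def aTilde (x : ℤ) : ℤ := if Even x then 0 else -1

/-- Modified local time `ℓ~_n(x)`: equals `ℓ_n(x - 1/2)` for `x ≤ X_n` and
`ℓ_n(x + 1/2)` for `x > X_n`. -/
def modLoc (ε : ℕ → ℤ) (n : ℕ) (x : ℤ) : ℤ :=
  if x ≤ Xwalk ε n then ellEdge ε n (x - 1) else ellEdge ε n x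

/-- Area `𝒜(f) = Σ_x (f(x) - ã(x))` between `f` and `ã`. -/
noncomputable def areaA (f : ℤ → ℤ) : ℤ := ∑ᶠ x : ℤ, (f x - aTilde x)

/-- `m₋(f) = 1 + max {x ≤ 0 : f x = -1}`. -/
noncomputable def mMinus (f : ℤ → ℤ) : ℤ := 1 + sSup {x : ℤ | x ≤ 0 ∧ f x = -1}

/-- `m₊(f) = -1 + min {x ≥ 0 : f x = -1}`. -/
noncomputable def mPlus (f : ℤ → ℤ) : ℤ := -1 + sInf {x : ℤ | 0 ≤ x ∧ f x = -1}

/-- `O(f)`: the number of zeros of `f` strictly between `m₋(f)` and `m₊(f)`. -/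
noncomputable def nZeros (f : ℤ → ℤ) : ℕ :=
  {x : ℤ | mMinus f < x ∧ x < mPlus f ∧ f x = 0}.ncard

/-- `o₊ = max {x < m₊(f) : f x = 0}`. -/
noncomputable def oPlus (f : ℤ → ℤ) : ℤ := sSup {x : ℤ | x < mPlus f ∧ f x = 0}

/-- `o₋ = min {x > m₋(f) : f x = 0}`. -/
noncomputable def oMinus (f : ℤ → ℤ) : ℤ := sInf {x : ℤ | mMinus f < x ∧ f x = 0}

open Classical in
/-- The admissible interval `I(f)`. -/
noncomputable def interI (f : ℤ → ℤ) : Set ℤ :=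
  if f = aTilde then {0}
  else if nZeros f = 0 then Set.Icc (mMinus f) (mPlus f)
  else if 0 < oPlus f then Set.Ioc (oPlus f) (mPlus f)
  else Set.Ico (mMinus f) (oMinus f)

/-- Coins as `±1`-valued integers from booleans. -/
def coin (ω : ℕ → Bool) (j : ℕ) : ℤ := if ω j then 1 else -1

/-!
Each step of the walk changes the modified local time `ℓ~` at exactly one site, and by
`1 + ℓ_n⁺ - ℓ_{n+1}⁺`; hence `𝒜(ℓ~_n) + ℓ_n⁺ = n` for every `n`.

For the count of equality times: adjacent edge local times always differ by `±1`, except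
across the current position, where they differ by `0` or `±2`. Consequently
`max(ℓ⁻, ℓ⁺)` rises by one at a step taken from an equality time and drops by one at any
other step, so `2 j_n = n + max(ℓ_n⁻, ℓ_n⁺)`, where `j_n` is the number of equality times
before `n`. Since local times never drop below `-1`, this also shows that there are
infinitely many equality times, so that `j_{N(k)} = k`.
-/

open Function

lemma aTilde_add_one_sub (x : ℤ) :
    aTilde (x + 1) - aTilde x = 1 ∨ aTilde (x + 1) - aTilde x = -1 := by
  simp only [aTilde, Int.even_add_one]
  split_ifs <;> simp_all

lemma aInit_of_nonneg {i : ℤ} (hi : 0 ≤ i) : aInit i = aTilde i := by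
  simp only [aInit, if_pos hi, aTilde]

lemma aInit_of_neg {i : ℤ} (hi : i < 0) : aInit i = aTilde (i + 1) := by
  simp only [aInit, if_neg (not_le.2 hi), aTilde, Int.even_iff]
  split_ifs <;> omega

lemma areaA_update {f : ℤ → ℤ} (hf : (f - aTilde).HasFiniteSupport) (y v : ℤ) :
    (update f y v - aTilde).HasFiniteSupport ∧ areaA (update f y v) = areaA f + (v - f y) := by
  have hsplit : update f y v - aTilde = (f - aTilde) + Pi.single y (v - f y) := by
    rw [Pi.update_eq_sub_add_single, Pi.single_sub]; abel
  have hs : (Pi.single y (v - f y) : ℤ → ℤ).HasFiniteSupport :=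
    (Set.finite_singleton y).subset Pi.support_single_subset
  refine ⟨hsplit ▸ hf.add hs, ?_⟩
  change ∑ᶠ x, (update f y v - aTilde) x = ∑ᶠ x, (f - aTilde) x + _
  rw [hsplit]
  simp only [Pi.add_apply]
  rw [finsum_add_distrib hf hs,
    finsum_eq_single (Pi.single y (v - f y)) y fun x hx => Pi.single_eq_of_ne hx _,
    Pi.single_eq_same]

def IsLocalTimeProfile (L : ℤ → ℤ) (x : ℤ) : Prop :=
  (∀ i, i ≠ x - 1 → L (i + 1) - L i = 1 ∨ L (i + 1) - L i = -1) ∧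
    (L (x - 1) - L x = 0 ∨ L (x - 1) - L x = 2 ∨ L (x - 1) - L x = -2)

namespace IsLocalTimeProfile

variable {L : ℤ → ℤ} {x : ℤ}

lemma update_right (hL : IsLocalTimeProfile L x) (h : L x ≤ L (x - 1)) :
    IsLocalTimeProfile (update L x (L x + 1)) (x + 1) := by
  obtain ⟨hstep, hx⟩ := hL
  have hnext := hstep x (by omega)
  refine ⟨fun i hi => ?_, ?_⟩
  · by_cases hi' : i = x - 1
    · subst hi'
      simp only [sub_add_cancel, update_self, update_of_ne (show x - 1 ≠ x by omega)]
      omega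
    · have := hstep i hi'
      rw [update_of_ne (by omega), update_of_ne (by omega)]
      exact this
  · simp only [add_sub_cancel_right, update_self, update_of_ne (show x + 1 ≠ x by omega)]
    omega

lemma update_left (hL : IsLocalTimeProfile L x) (h : L (x - 1) ≤ L x) :
    IsLocalTimeProfile (update L (x - 1) (L (x - 1) + 1)) (x - 1) := by
  obtain ⟨hstep, hx⟩ := hL
  have hprev := hstep (x - 2) (by omega)
  rw [show x - 2 + 1 = x - 1 by ring] at hprev
  refine ⟨fun i hi => ?_, ?_⟩
  · by_cases hi' : i = x - 1
    · subst hi'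
      simp only [sub_add_cancel, update_self, update_of_ne (show x ≠ x - 1 by omega)]
      omega
    · have := hstep i hi'
      rw [update_of_ne (by omega), update_of_ne (by omega)]
      exact this
  · rw [show x - 1 - 1 = x - 2 by ring]
    simp only [update_self, update_of_ne (show x - 2 ≠ x - 1 by omega)]
    omega

end IsLocalTimeProfile

lemma isLocalTimeProfile_aInit : IsLocalTimeProfile aInit 0 := by
  refine ⟨fun i hi => ?_, by decide⟩
  rcases lt_or_ge i 0 with hneg | hnonneg
  · rw [aInit_of_neg hneg, aInit_of_neg (by omega)]
    exact aTilde_add_one_sub _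
  · rw [aInit_of_nonneg hnonneg, aInit_of_nonneg (by omega)]
    exact aTilde_add_one_sub _

section Walk

variable (ε : ℕ → ℤ)

instance : DecidablePred (IsEqTime ε) :=
  fun n => inferInstanceAs (Decidable (ellMinus ε n = ellPlus ε n))

lemma ellEdge_succ (n : ℕ) :
    ellEdge ε (n + 1) = update (ellEdge ε n) (min (Xwalk ε n) (Xwalk ε (n + 1)))
      (ellEdge ε n (min (Xwalk ε n) (Xwalk ε (n + 1))) + 1) := by
  funext i
  rw [update_apply]
  split_ifs with h
  · subst h; exact if_pos rfl
  · exact if_neg h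

lemma coins_succ (n : ℕ) :
    (srw ε (n + 1)).coins = (srw ε n).coins + if IsEqTime ε n then 1 else 0 := by
  by_cases h : IsEqTime ε n
  · rw [if_pos h]; exact if_pos h
  · rw [if_neg h]; exact if_neg h

lemma coins_eq_count (n : ℕ) : (srw ε n).coins = Nat.count (IsEqTime ε) n := by
  induction n with
  | zero => rfl
  | succ n ih => rw [coins_succ, Nat.count_succ, ih]

lemma neg_one_le_ellEdge (n : ℕ) (i : ℤ) : -1 ≤ ellEdge ε n i := by
  induction n generalizing i with
  | zero => change -1 ≤ aInit i; unfold aInit; split_ifs <;> omega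
  | succ n ih =>
    rw [ellEdge_succ, update_apply]
    split_ifs
    · linarith [ih (min (Xwalk ε n) (Xwalk ε (n + 1)))]
    · exact ih i

lemma modLoc_zero : modLoc ε 0 = aTilde := by
  funext x
  change (if x ≤ 0 then aInit (x - 1) else aInit x) = aTilde x
  split_ifs with hx
  · rw [aInit_of_neg (by omega), sub_add_cancel]
  · rw [aInit_of_nonneg (by omega)]

variable {ε} {n : ℕ}

lemma Xwalk_succ_of_ellPlus_lt (h : ellPlus ε n < ellMinus ε n) :
    Xwalk ε (n + 1) = Xwalk ε n + 1 :=
  if_pos h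

lemma Xwalk_succ_of_ellMinus_lt (h : ellMinus ε n < ellPlus ε n) :
    Xwalk ε (n + 1) = Xwalk ε n - 1 :=
  (if_neg (not_lt.2 h.le)).trans (if_pos h)

lemma Xwalk_succ_of_isEqTime (h : IsEqTime ε n) :
    Xwalk ε (n + 1) = Xwalk ε n + ε (srw ε n).coins :=
  (if_neg (not_lt.2 h.le)).trans (if_neg (not_lt.2 h.ge))

lemma Xwalk_succ_cases (hε : ∀ j, ε j = 1 ∨ ε j = -1) (n : ℕ) :
    (Xwalk ε (n + 1) = Xwalk ε n + 1 ∧ ellPlus ε n ≤ ellMinus ε n) ∨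
      (Xwalk ε (n + 1) = Xwalk ε n - 1 ∧ ellMinus ε n ≤ ellPlus ε n) := by
  rcases lt_trichotomy (ellPlus ε n) (ellMinus ε n) with h | h | h
  · exact Or.inl ⟨Xwalk_succ_of_ellPlus_lt h, h.le⟩
  · rw [Xwalk_succ_of_isEqTime h.symm]
    rcases hε (srw ε n).coins with hc | hc <;> rw [hc]
    · exact Or.inl ⟨rfl, h.le⟩
    · exact Or.inr ⟨by ring, h.ge⟩
  · exact Or.inr ⟨Xwalk_succ_of_ellMinus_lt h, h.le⟩

lemma ellEdge_succ_of_right (h : Xwalk ε (n + 1) = Xwalk ε n + 1) :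
    ellEdge ε (n + 1) = update (ellEdge ε n) (Xwalk ε n) (ellEdge ε n (Xwalk ε n) + 1) := by
  rw [ellEdge_succ, h, min_eq_left (by omega)]

lemma ellEdge_succ_of_left (h : Xwalk ε (n + 1) = Xwalk ε n - 1) :
    ellEdge ε (n + 1) =
      update (ellEdge ε n) (Xwalk ε n - 1) (ellEdge ε n (Xwalk ε n - 1) + 1) := by
  rw [ellEdge_succ, h, min_eq_right (by omega)]

lemma modLoc_succ_of_right (h : Xwalk ε (n + 1) = Xwalk ε n + 1) :
    modLoc ε (n + 1) = update (modLoc ε n) (Xwalk ε n + 1) (ellEdge ε n (Xwalk ε n) + 1) := by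
  funext x
  simp only [modLoc, ellEdge_succ_of_right h, h, update_apply]
  split_ifs <;> omega

lemma modLoc_succ_of_left (h : Xwalk ε (n + 1) = Xwalk ε n - 1) :
    modLoc ε (n + 1) = update (modLoc ε n) (Xwalk ε n) (ellEdge ε n (Xwalk ε n)) := by
  funext x
  simp only [modLoc, ellEdge_succ_of_left h, h, update_apply]
  split_ifs <;> first | omega | exact congrArg _ (by omega)

end Walk

theorem areaA_modLoc_add_ellPlus {ε : ℕ → ℤ} (hε : ∀ j, ε j = 1 ∨ ε j = -1)
    (n : ℕ) :
    (modLoc ε n - aTilde).HasFiniteSupport ∧ areaA (modLoc ε n) + ellPlus ε n = n := by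
  induction n with
  | zero =>
    refine ⟨by simp [modLoc_zero, HasFiniteSupport], ?_⟩
    simp only [modLoc_zero, areaA, sub_self, finsum_zero, zero_add, Nat.cast_zero]
    rfl
  | succ n ih =>
    obtain ⟨hfin, harea⟩ := ih
    rcases Xwalk_succ_cases hε n with ⟨h, -⟩ | ⟨h, -⟩
    · rw [modLoc_succ_of_right h]
      obtain ⟨hfin', harea'⟩ :=
        areaA_update hfin (Xwalk ε n + 1) (ellEdge ε n (Xwalk ε n) + 1)
      have hplus : ellPlus ε (n + 1) = ellEdge ε n (Xwalk ε n + 1) := by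
        simp [ellPlus, ellEdge_succ_of_right h, h]
      have hmod : modLoc ε n (Xwalk ε n + 1) = ellEdge ε n (Xwalk ε n + 1) := if_neg (by omega)
      refine ⟨hfin', ?_⟩
      rw [ellPlus] at harea
      push_cast
      omega
    · rw [modLoc_succ_of_left h]
      obtain ⟨hfin', harea'⟩ := areaA_update hfin (Xwalk ε n) (ellEdge ε n (Xwalk ε n))
      have hplus : ellPlus ε (n + 1) = ellEdge ε n (Xwalk ε n - 1) + 1 := by
        simp [ellPlus, ellEdge_succ_of_left h, h]
      have hmod : modLoc ε n (Xwalk ε n) = ellEdge ε n (Xwalk ε n - 1) := if_pos le_rfl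
      refine ⟨hfin', ?_⟩
      rw [ellPlus] at harea
      push_cast
      omega

section Coins

variable {ε : ℕ → ℤ} {n : ℕ}

lemma max_ellMinus_ellPlus_succ (hε : ∀ j, ε j = 1 ∨ ε j = -1)
    (hprof : IsLocalTimeProfile (ellEdge ε n) (Xwalk ε n)) :
    max (ellMinus ε (n + 1)) (ellPlus ε (n + 1)) =
      max (ellMinus ε n) (ellPlus ε n) + if IsEqTime ε n then 1 else -1 := by
  obtain ⟨hstep, hx⟩ := hprof
  simp only [IsEqTime, ellMinus, ellPlus] at hx ⊢
  rcases Xwalk_succ_cases hε n with ⟨h, hle⟩ | ⟨h, hle⟩ <;>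
    simp only [ellMinus, ellPlus] at hle
  · have hnext := hstep (Xwalk ε n) (by omega)
    simp only [ellEdge_succ_of_right h, h, add_sub_cancel_right, update_self,
      update_of_ne (show Xwalk ε n + 1 ≠ Xwalk ε n by omega)]
    split_ifs <;> omega
  · have hprev := hstep (Xwalk ε n - 2) (by omega)
    rw [show Xwalk ε n - 2 + 1 = Xwalk ε n - 1 by ring] at hprev
    simp only [ellEdge_succ_of_left h, h, show Xwalk ε n - 1 - 1 = Xwalk ε n - 2 by ring,
      update_self, update_of_ne (show Xwalk ε n - 2 ≠ Xwalk ε n - 1 by omega)]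
    split_ifs <;> omega

theorem isLocalTimeProfile_and_two_mul_coins (hε : ∀ j, ε j = 1 ∨ ε j = -1) (n : ℕ) :
    IsLocalTimeProfile (ellEdge ε n) (Xwalk ε n) ∧
      2 * ((srw ε n).coins : ℤ) = n + max (ellMinus ε n) (ellPlus ε n) := by
  induction n with
  | zero =>
    refine ⟨isLocalTimeProfile_aInit, ?_⟩
    change 2 * ((0 : ℕ) : ℤ) = ((0 : ℕ) : ℤ) + max (aInit (0 - 1)) (aInit 0)
    decide
  | succ n ih =>
    obtain ⟨hprof, hcoins⟩ := ih
    have hmax := max_ellMinus_ellPlus_succ hε hprof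
    refine ⟨?_, ?_⟩
    · rcases Xwalk_succ_cases hε n with ⟨h, hle⟩ | ⟨h, hle⟩
      · rw [ellEdge_succ_of_right h, h]; exact hprof.update_right hle
      · rw [ellEdge_succ_of_left h, h]; exact hprof.update_left hle
    · rw [coins_succ]
      split_ifs at hmax ⊢ <;> push_cast <;> omega

end Coins

section EqualityTimes

variable {ε : ℕ → ℤ}

theorem infinite_setOf_isEqTime (hε : ∀ j, ε j = 1 ∨ ε j = -1) :
    {n | IsEqTime ε n}.Infinite := by
  intro hfin
  set m := 2 * hfin.toFinset.card + 2
  have hcount := Nat.count_le_card hfin m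
  have hcoins := (isLocalTimeProfile_and_two_mul_coins hε m).2
  have hplus := neg_one_le_ellEdge ε m (Xwalk ε m)
  rw [← coins_eq_count] at hcount
  simp only [ellPlus] at hcoins
  omega

lemma coins_timeN (hε : ∀ j, ε j = 1 ∨ ε j = -1) (k : ℕ) :
    (srw ε (timeN ε k)).coins = k := by
  rw [coins_eq_count]
  exact Nat.count_nth_of_infinite (infinite_setOf_isEqTime hε) k

end EqualityTimes

/-- if `ℓ_n⁻ = ℓ_n⁺ = h` then `n = 𝒜(ℓ~_n) + h`, and writing
`n = N(k)` one has `k = 𝒜(ℓ~_n)/2 + h`. -/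
theorem statement1 (ε : ℕ → ℤ) (hε : ∀ j, ε j = 1 ∨ ε j = -1)
    (n : ℕ) (h : ℤ) (hm : ellMinus ε n = h) (hp : ellPlus ε n = h) :
    (n : ℤ) = areaA (modLoc ε n) + h ∧
      ∀ k : ℕ, n = timeN ε k → (k : ℤ) = areaA (modLoc ε n) / 2 + h := by
  have harea := (areaA_modLoc_add_ellPlus hε n).2
  have hcoins := (isLocalTimeProfile_and_two_mul_coins hε n).2
  rw [hp] at harea
  rw [hm, hp, max_self] at hcoins
  refine ⟨by omega, fun k hk => ?_⟩
  rw [hk, coins_timeN hε k] at hcoins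
  omega
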